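/- Let c > 0, g > 0, ε ∈ {−1, 1}, and let b be a constant with c/2 < b < φ₀^+. Let I be an open interval containing 0 and let φ : I → ℝ be differentiable with φ(0) = b such that for every ξ ∈ I: c/2 < φ(ξ) < φ₀^+, φ(ξ)² + m₁φ(ξ) + m₂ > 0, 2√(φ(ξ)² + m₁φ(ξ) + m₂) + 2φ(ξ) + m₁ > 0, 2√(a₂)·√(φ(ξ)² + m₁φ(ξ) + m₂) + b₂φ(ξ) + m₃ > 0, and φ′(ξ) = ε·(φ(ξ) − φ₀^+)·√(φ(ξ)² + m₁φ(ξ) + m₂)/(2φ(ξ)). Then β₂(φ(ξ)) = β₂(b)·exp(εξ/2) for all ξ ∈ I. (The case ε = −1 is the kink-like wave solution φ₃ of equation (3.9), and ε = 1 is the antikink-like wave solution φ₄ of equation (3.10).) -/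

import Mathlib

/-!
Write `Q(x) = √(x² + m₁x + m₂)`. With the paper's constants, `log β₂` is an antiderivative of
`x / ((x - φ₀⁺) Q(x))`, which is exactly `(ε/2) / φ'` along the orbit
`φ' = ε (φ - φ₀⁺) Q(φ) / (2φ)`. Hence `ξ ↦ log β₂(φ ξ)` has constant derivative `ε/2` on the
convex set `I`, so it is affine there.
-/

open Real

theorem Convex.eq_add_mul_sub_of_hasDerivAt {I : Set ℝ} (hI : Convex ℝ I) {F : ℝ → ℝ} {k : ℝ}
    (hF : ∀ x ∈ I, HasDerivAt F k x) {a : ℝ} (ha : a ∈ I) :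
    ∀ x ∈ I, F x = F a + k * (x - a) := by
  intro x hx
  have hG (y) (hy : y ∈ I) : HasDerivWithinAt (fun y => F y - k * y) 0 I y := by
    simpa using ((hF y hy).fun_sub ((hasDerivAt_id y).const_mul k)).hasDerivWithinAt
  have h := hI.norm_image_sub_le_of_norm_hasDerivWithin_le hG (fun _ _ => norm_zero.le) ha hx
  rw [zero_mul, norm_le_zero_iff, sub_eq_zero] at h
  linarith

theorem hasDerivAt_sqrt_quadratic {m1 m2 x : ℝ} (hq : 0 < x ^ 2 + m1 * x + m2) :
    HasDerivAt (fun y => √(y ^ 2 + m1 * y + m2))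
      ((2 * x + m1) / (2 * √(x ^ 2 + m1 * x + m2))) x := by
  have hq' : HasDerivAt (fun y => y ^ 2 + m1 * y + m2) (2 * x + m1) x := by
    simpa using
      (((hasDerivAt_id x).fun_pow 2).fun_add ((hasDerivAt_id x).const_mul m1)).add_const m2
  exact hq'.sqrt hq.ne'

section KinkLike

variable {c g s φ0p m1 m2 m3 b2 A α : ℝ}

/-- The polynomial identity that makes `log β₂` an antiderivative of `x / ((x - φ₀⁺) Q(x))`;
this is where the specific values of `m₁, m₂, m₃, b₂, a₂` are needed. -/
theorem kink_identity (hs2 : s ^ 2 = c ^ 2 + 4 * g) (hA2 : A ^ 2 = c ^ 2 + 4 * g + c * s)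
    (hφ0p : φ0p = (c + s) / 2) (hm1 : m1 = -(c - 3 * s) / 3)
    (hm2 : m2 = (c ^ 2 + 6 * g + c * s) / 6) (hm3 : m3 = (2 / 3) * (c ^ 2 + 6 * g + c * s))
    (hb2 : b2 = (2 * c + 6 * s) / 3) {x Q : ℝ} (hQ2 : Q ^ 2 = x ^ 2 + m1 * x + m2) :
    Q * (2 * A * Q + b2 * x + m3) - (x - φ0p) * (A * (2 * x + m1) + b2 * Q) =
      A * (2 * A * Q + b2 * x + m3) := by
  subst hm1 hm2 hm3 hb2 hφ0p
  linear_combination (2 * A) * hQ2 - (2 * Q) * hA2 + (A / 2 + Q) * hs2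

noncomputable def logBetaTwo (m1 m2 m3 b2 A α φ0p x : ℝ) : ℝ :=
  log (2 * √(x ^ 2 + m1 * x + m2) + 2 * x + m1) + α * log (φ0p - x) -
    α * log (2 * A * √(x ^ 2 + m1 * x + m2) + b2 * x + m3)

theorem exp_logBetaTwo {x : ℝ} (hN : 0 < 2 * √(x ^ 2 + m1 * x + m2) + 2 * x + m1)
    (hD : 0 < 2 * A * √(x ^ 2 + m1 * x + m2) + b2 * x + m3) (hx : x < φ0p) :
    exp (logBetaTwo m1 m2 m3 b2 A α φ0p x) =
      (2 * √(x ^ 2 + m1 * x + m2) + 2 * x + m1) * (φ0p - x) ^ α /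
        (2 * A * √(x ^ 2 + m1 * x + m2) + b2 * x + m3) ^ α := by
  rw [logBetaTwo, exp_sub, exp_add, exp_log hN, rpow_def_of_pos (sub_pos.2 hx),
    rpow_def_of_pos hD, mul_comm α, mul_comm α]

theorem logBetaTwo_deriv_eq {x Q : ℝ} (hQ : Q ≠ 0)
    (hD : 2 * A * Q + b2 * x + m3 ≠ 0) (hx : x - φ0p ≠ 0) (hαA : α * A = φ0p)
    (key : Q * (2 * A * Q + b2 * x + m3) - (x - φ0p) * (A * (2 * x + m1) + b2 * Q) =
      A * (2 * A * Q + b2 * x + m3)) :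
    1 / Q + α * (-1 / (φ0p - x)) -
        α * ((A * (2 * x + m1) + b2 * Q) / (Q * (2 * A * Q + b2 * x + m3))) =
      x / ((x - φ0p) * Q) := by
  have hP : φ0p - x ≠ 0 := sub_ne_zero.2 (sub_ne_zero.1 hx).symm
  generalize 2 * A * Q + b2 * x + m3 = D at *
  field_simp
  linear_combination (-α * (x - φ0p)) * key + (φ0p - x) * D * hαA

theorem hasDerivAt_logBetaTwo (hs2 : s ^ 2 = c ^ 2 + 4 * g) (hA2 : A ^ 2 = c ^ 2 + 4 * g + c * s)
    (hαA : α * A = φ0p) (hφ0p : φ0p = (c + s) / 2) (hm1 : m1 = -(c - 3 * s) / 3)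
    (hm2 : m2 = (c ^ 2 + 6 * g + c * s) / 6) (hm3 : m3 = (2 / 3) * (c ^ 2 + 6 * g + c * s))
    (hb2 : b2 = (2 * c + 6 * s) / 3) {x : ℝ} (hq : 0 < x ^ 2 + m1 * x + m2)
    (hN : 0 < 2 * √(x ^ 2 + m1 * x + m2) + 2 * x + m1)
    (hD : 0 < 2 * A * √(x ^ 2 + m1 * x + m2) + b2 * x + m3) (hx : x < φ0p) :
    HasDerivAt (logBetaTwo m1 m2 m3 b2 A α φ0p)
      (x / ((x - φ0p) * √(x ^ 2 + m1 * x + m2))) x := by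
  have hsqrt := hasDerivAt_sqrt_quadratic hq
  have hQ0 : √(x ^ 2 + m1 * x + m2) ≠ 0 := (sqrt_pos.2 hq).ne'
  have hN0 := hN.ne'
  have hD0 := hD.ne'
  have hlogN : HasDerivAt (fun y => log (2 * √(y ^ 2 + m1 * y + m2) + 2 * y + m1))
      (1 / √(x ^ 2 + m1 * x + m2)) x := by
    refine (((hsqrt.const_mul 2).fun_add ((hasDerivAt_id x).const_mul 2)).add_const m1).log hN0
      |>.congr_deriv ?_
    simp only [id]
    generalize √(x ^ 2 + m1 * x + m2) = Q at hQ0 hN0 ⊢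
    rw [div_eq_div_iff hN0 hQ0]
    field_simp
    ring
  have hlogP := (((hasDerivAt_id x).const_sub φ0p).log (sub_pos.2 hx).ne').const_mul α
  have hlogD : HasDerivAt (fun y => log (2 * A * √(y ^ 2 + m1 * y + m2) + b2 * y + m3))
      ((A * (2 * x + m1) + b2 * √(x ^ 2 + m1 * x + m2)) /
        (√(x ^ 2 + m1 * x + m2) * (2 * A * √(x ^ 2 + m1 * x + m2) + b2 * x + m3))) x := by
    refine (((hsqrt.const_mul (2 * A)).fun_add ((hasDerivAt_id x).const_mul b2)).add_const m3).log
      hD0 |>.congr_deriv ?_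
    simp only [id]
    generalize √(x ^ 2 + m1 * x + m2) = Q at hQ0 hD0 ⊢
    field_simp
  refine (hlogN.fun_add hlogP |>.fun_sub (hlogD.const_mul α)).congr_deriv ?_
  exact logBetaTwo_deriv_eq hQ0 hD0 (sub_neg.2 hx).ne hαA
    (kink_identity hs2 hA2 hφ0p hm1 hm2 hm3 hb2 (sq_sqrt hq.le))

theorem hasDerivAt_logBetaTwo_comp_orbit (hs2 : s ^ 2 = c ^ 2 + 4 * g)
    (hA2 : A ^ 2 = c ^ 2 + 4 * g + c * s) (hαA : α * A = φ0p) (hφ0p : φ0p = (c + s) / 2)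
    (hm1 : m1 = -(c - 3 * s) / 3) (hm2 : m2 = (c ^ 2 + 6 * g + c * s) / 6)
    (hm3 : m3 = (2 / 3) * (c ^ 2 + 6 * g + c * s)) (hb2 : b2 = (2 * c + 6 * s) / 3)
    {φ : ℝ → ℝ} {ε ξ : ℝ} (hpos : 0 < φ ξ) (hlt : φ ξ < φ0p) (hq : 0 < φ ξ ^ 2 + m1 * φ ξ + m2)
    (hN : 0 < 2 * √(φ ξ ^ 2 + m1 * φ ξ + m2) + 2 * φ ξ + m1)
    (hD : 0 < 2 * A * √(φ ξ ^ 2 + m1 * φ ξ + m2) + b2 * φ ξ + m3)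
    (horb : HasDerivAt φ (ε * (φ ξ - φ0p) * √(φ ξ ^ 2 + m1 * φ ξ + m2) / (2 * φ ξ)) ξ) :
    HasDerivAt (logBetaTwo m1 m2 m3 b2 A α φ0p ∘ φ) (ε / 2) ξ := by
  refine (hasDerivAt_logBetaTwo hs2 hA2 hαA hφ0p hm1 hm2 hm3 hb2 hq hN hD hlt).comp ξ horb
    |>.congr_deriv ?_
  have hQ0 : √(φ ξ ^ 2 + m1 * φ ξ + m2) ≠ 0 := (sqrt_pos.2 hq).ne'
  have hx0 : φ ξ - φ0p ≠ 0 := (sub_neg.2 hlt).ne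
  rw [div_mul_div_comm, div_eq_div_iff (by positivity) two_ne_zero]
  ring

end KinkLike

theorem osmosis_K22_kink_like_c_pos_g_pos_plus_general
    (c g : ℝ) (hc : 0 < c) (hg : 0 < g)
    (ε : ℝ)
    (s φ0p m1 m2 m3 a2 b2 α2 : ℝ)
    (hs : s = Real.sqrt (c ^ 2 + 4 * g))
    (hφ0p : φ0p = (c + s) / 2)
    (hm1 : m1 = -(c - 3 * s) / 3)
    (hm2 : m2 = (c ^ 2 + 6 * g + c * s) / 6)
    (hm3 : m3 = (2 / 3) * (c ^ 2 + 6 * g + c * s))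
    (ha2 : a2 = c ^ 2 + 4 * g + c * s)
    (hb2 : b2 = (2 * c + 6 * s) / 3)
    (hα2 : α2 = (c + s) / (2 * Real.sqrt a2))
    (β₂ : ℝ → ℝ)
    (hβ₂ : ∀ x : ℝ, β₂ x =
      (2 * Real.sqrt (x ^ 2 + m1 * x + m2) + 2 * x + m1) * (φ0p - x) ^ α2 /
        (2 * Real.sqrt a2 * Real.sqrt (x ^ 2 + m1 * x + m2) + b2 * x + m3) ^ α2)
    (b : ℝ)
    (I : Set ℝ) (hIconv : Convex ℝ I) (h0I : (0:ℝ) ∈ I)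
    (φ : ℝ → ℝ) (hφ0 : φ 0 = b)
    (hrange : ∀ ξ ∈ I, c / 2 < φ ξ ∧ φ ξ < φ0p)
    (hq : ∀ ξ ∈ I, 0 < (φ ξ) ^ 2 + m1 * φ ξ + m2)
    (hnum : ∀ ξ ∈ I, 0 < 2 * Real.sqrt ((φ ξ) ^ 2 + m1 * φ ξ + m2) + 2 * φ ξ + m1)
    (hden : ∀ ξ ∈ I,
      0 < 2 * Real.sqrt a2 * Real.sqrt ((φ ξ) ^ 2 + m1 * φ ξ + m2) + b2 * φ ξ + m3)
    (horb : ∀ ξ ∈ I, HasDerivAt φ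
      (ε * (φ ξ - φ0p) * Real.sqrt ((φ ξ) ^ 2 + m1 * φ ξ + m2) / (2 * φ ξ)) ξ) :
    ∀ ξ ∈ I, β₂ (φ ξ) = β₂ b * Real.exp (ε * ξ / 2) := by
  have hs2 : s ^ 2 = c ^ 2 + 4 * g := by rw [hs, sq_sqrt (by positivity)]
  have ha2pos : 0 < a2 := by rw [ha2, hs]; positivity
  have hA2 : √a2 ^ 2 = c ^ 2 + 4 * g + c * s := by rw [sq_sqrt ha2pos.le, ha2]
  have hαA : α2 * √a2 = φ0p := by
    rw [hα2, hφ0p]; field_simp [(sqrt_pos.2 ha2pos).ne']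
  have hβ (ξ) (hξ : ξ ∈ I) : β₂ (φ ξ) = exp (logBetaTwo m1 m2 m3 b2 √a2 α2 φ0p (φ ξ)) := by
    rw [hβ₂, exp_logBetaTwo (hnum ξ hξ) (hden ξ hξ) (hrange ξ hξ).2]
  have hlin := hIconv.eq_add_mul_sub_of_hasDerivAt (fun ξ hξ =>
    hasDerivAt_logBetaTwo_comp_orbit hs2 hA2 hαA hφ0p hm1 hm2 hm3 hb2
      ((half_pos hc).trans (hrange ξ hξ).1) (hrange ξ hξ).2 (hq ξ hξ) (hnum ξ hξ)
      (hden ξ hξ) (horb ξ hξ)) h0I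
  intro ξ hξ
  rw [hβ ξ hξ, ← hφ0, hβ 0 h0I, ← exp_add]
  simp only [Function.comp_apply] at hlin
  rw [hlin ξ hξ]
  congr 1
  ring

/-- kink-like (ε = −1, eq. (3.9)) and antikink-like (ε = 1, eq. (3.10))
wave solutions of the osmosis K(2,2) equation for `c > 0`, `g > 0`:
a solution of the orbit equation through `b ∈ (c/2, φ₀^+)` satisfies
`β₂(φ(ξ)) = β₂(b)·exp(εξ/2)`. -/
theorem osmosis_K22_kink_like_c_pos_g_pos_plus
    (c g : ℝ) (hc : 0 < c) (hg : 0 < g)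
    (ε : ℝ) (hε : ε = -1 ∨ ε = 1)
    (s φ0p m1 m2 m3 a2 b2 α2 : ℝ)
    (hs : s = Real.sqrt (c ^ 2 + 4 * g))
    (hφ0p : φ0p = (c + s) / 2)
    (hm1 : m1 = -(c - 3 * s) / 3)
    (hm2 : m2 = (c ^ 2 + 6 * g + c * s) / 6)
    (hm3 : m3 = (2 / 3) * (c ^ 2 + 6 * g + c * s))
    (ha2 : a2 = c ^ 2 + 4 * g + c * s)
    (hb2 : b2 = (2 * c + 6 * s) / 3)
    (hα2 : α2 = (c + s) / (2 * Real.sqrt a2))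
    (β₂ : ℝ → ℝ)
    (hβ₂ : ∀ x : ℝ, β₂ x =
      (2 * Real.sqrt (x ^ 2 + m1 * x + m2) + 2 * x + m1) * (φ0p - x) ^ α2 /
        (2 * Real.sqrt a2 * Real.sqrt (x ^ 2 + m1 * x + m2) + b2 * x + m3) ^ α2)
    (b : ℝ) (hb : c / 2 < b ∧ b < φ0p)
    (I : Set ℝ) (hI : IsOpen I) (hIconv : Convex ℝ I) (h0I : (0:ℝ) ∈ I)
    (φ : ℝ → ℝ) (hφ0 : φ 0 = b)
    (hrange : ∀ ξ ∈ I, c / 2 < φ ξ ∧ φ ξ < φ0p)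
    (hq : ∀ ξ ∈ I, 0 < (φ ξ) ^ 2 + m1 * φ ξ + m2)
    (hnum : ∀ ξ ∈ I, 0 < 2 * Real.sqrt ((φ ξ) ^ 2 + m1 * φ ξ + m2) + 2 * φ ξ + m1)
    (hden : ∀ ξ ∈ I,
      0 < 2 * Real.sqrt a2 * Real.sqrt ((φ ξ) ^ 2 + m1 * φ ξ + m2) + b2 * φ ξ + m3)
    (horb : ∀ ξ ∈ I, HasDerivAt φ
      (ε * (φ ξ - φ0p) * Real.sqrt ((φ ξ) ^ 2 + m1 * φ ξ + m2) / (2 * φ ξ)) ξ) :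
    ∀ ξ ∈ I, β₂ (φ ξ) = β₂ b * Real.exp (ε * ξ / 2) :=
  osmosis_K22_kink_like_c_pos_g_pos_plus_general c g hc hg ε s φ0p m1 m2 m3 a2 b2 α2 hs hφ0p hm1 hm2
    hm3 ha2 hb2 hα2 β₂ hβ₂ b I hIconv h0I φ hφ0 hrange hq hnum hden horb
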